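/- There do not exist (p,q) ∈ [0,1]² and α₀ > 0 such that (p,q) is an α-Nash equilibrium of the continuous-time Example-3 game for every α ∈ (0, α₀]; i.e., this single-controller continuous-time game admits no stationary Blackwell–Nash equilibrium. -/

import Mathlib

open Matrix Set

noncomputable section

/-- Transition rate matrix of the continuous-time Example-3 game
(controlled by player 2 alone). -/
def ex3Q (q : ℝ) : Matrix (Fin 2) (Fin 2) ℝ := !![-(1-q), 1-q; 1, -1]

/-- Expected reward-rate vector of player 1 in the Example-3 game. -/
def ex3r1 (p q : ℝ) : Fin 2 → ℝ :=
  ![4*p*q + 6*p*(1-q) + 5*(1-p)*q + 4*(1-p)*(1-q), 6]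

/-- Expected reward-rate vector of player 2 in the Example-3 game. -/
def ex3r2 (p q : ℝ) : Fin 2 → ℝ :=
  ![9*p*q + 3*p*(1-q) + 4*(1-p)*q + 5*(1-p)*(1-q), 7]

/-- α-discounted value vector of player 1. -/
def ex3v1 (α p q : ℝ) : Fin 2 → ℝ :=
  (α • (1 : Matrix (Fin 2) (Fin 2) ℝ) - ex3Q q)⁻¹.mulVec (ex3r1 p q)

/-- α-discounted value vector of player 2. -/
def ex3v2 (α p q : ℝ) : Fin 2 → ℝ :=
  (α • (1 : Matrix (Fin 2) (Fin 2) ℝ) - ex3Q q)⁻¹.mulVec (ex3r2 p q)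

/-- `(p,q)` is an α-Nash equilibrium of the Example-3 game. -/
def ex3IsNash (α p q : ℝ) : Prop :=
  p ∈ Icc (0:ℝ) 1 ∧ q ∈ Icc (0:ℝ) 1 ∧
  (∀ p' ∈ Icc (0:ℝ) 1, ∀ s, ex3v1 α p' q s ≤ ex3v1 α p q s) ∧
  (∀ q' ∈ Icc (0:ℝ) 1, ∀ s, ex3v2 α p q' s ≤ ex3v2 α p q s)

lemma ex3_det_pos (α q : ℝ) (hα : 0 < α) (hq : q ≤ 1) : 0 < α*(α+2-q) := by nlinarith

lemma ex3_inv (α q : ℝ) (hα : 0 < α) (hq : q ≤ 1) :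
    (α • (1 : Matrix (Fin 2) (Fin 2) ℝ) - ex3Q q)⁻¹
      = (α*(α+2-q))⁻¹ • !![α+1, 1-q; 1, α+1-q] := by
  have hd : α*(α+2-q) ≠ 0 := ne_of_gt (ex3_det_pos α q hα hq)
  have key : (α • (1 : Matrix (Fin 2) (Fin 2) ℝ) - ex3Q q) * !![α+1, 1-q; 1, α+1-q]
      = (α*(α+2-q)) • (1 : Matrix (Fin 2) (Fin 2) ℝ) := by
    ext i j
    fin_cases i <;> fin_cases j <;>
      simp [ex3Q, Matrix.mul_apply, Fin.sum_univ_two, Matrix.one_apply,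
        Matrix.smul_apply, Matrix.sub_apply] <;> ring
  apply inv_eq_right_inv
  rw [Matrix.mul_smul, key, smul_smul, inv_mul_cancel₀ hd, one_smul]

lemma ex3v1_one (α p q : ℝ) (hα : 0 < α) (hq : q ≤ 1) :
    ex3v1 α p q 1 = ((4*p*q + 6*p*(1-q) + 5*(1-p)*q + 4*(1-p)*(1-q)) + (α+1-q)*6)
        / (α*(α+2-q)) := by
  have hd : α * 2 - α * q + α ^ 2 ≠ 0 := by nlinarith
  have hα' : α ≠ 0 := ne_of_gt hα
  have h2 : (2:ℝ) + (α - q) ≠ 0 := by nlinarith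
  rw [ex3v1, ex3_inv α q hα hq]
  simp [Matrix.mulVec, dotProduct, Fin.sum_univ_two, ex3r1]
  field_simp

lemma ex3v2_one (α p q : ℝ) (hα : 0 < α) (hq : q ≤ 1) :
    ex3v2 α p q 1 = ((9*p*q + 3*p*(1-q) + 4*(1-p)*q + 5*(1-p)*(1-q)) + (α+1-q)*7)
        / (α*(α+2-q)) := by
  have hd : α * 2 - α * q + α ^ 2 ≠ 0 := by nlinarith
  have hα' : α ≠ 0 := ne_of_gt hα
  have h2 : (2:ℝ) + (α - q) ≠ 0 := by nlinarith
  rw [ex3v2, ex3_inv α q hα hq]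
  simp [Matrix.mulVec, dotProduct, Fin.sum_univ_two, ex3r2]
  field_simp

lemma player1_cond (α p p' q : ℝ) (hα : 0 < α) (hq : q ≤ 1)
    (h : ex3v1 α p' q 1 ≤ ex3v1 α p q 1) : 0 ≤ (2-3*q)*(p-p') := by
  rw [ex3v1_one α p q hα hq, ex3v1_one α p' q hα hq] at h
  have hd := ex3_det_pos α q hα hq
  rw [div_le_div_iff₀ hd hd] at h
  nlinarith

lemma player2_cond (α p q q' : ℝ) (hα : 0 < α) (hq : q ≤ 1) (hq' : q' ≤ 1)
    (h : ex3v2 α p q' 1 ≤ ex3v2 α p q 1) :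
    0 ≤ (12*p - 4 - α*(1-7*p))*(q-q') := by
  rw [ex3v2_one α p q hα hq, ex3v2_one α p q' hα hq'] at h
  have hd := ex3_det_pos α q hα hq
  have hd' := ex3_det_pos α q' hα hq'
  rw [div_le_div_iff₀ hd' hd] at h
  nlinarith

/-- The single-controller continuous-time Example-3 game has no stationary
Blackwell–Nash equilibrium. -/
theorem ex3_no_stationary_BNE :
    ¬ ∃ (p q α₀ : ℝ), p ∈ Icc (0:ℝ) 1 ∧ q ∈ Icc (0:ℝ) 1 ∧ 0 < α₀ ∧
      ∀ α ∈ Ioc 0 α₀, ex3IsNash α p q := by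
  rintro ⟨p, q, α₀, ⟨hp0, hp1⟩, ⟨hq0, hq1⟩, hα₀, h⟩
  have hmem : α₀ ∈ Ioc (0:ℝ) α₀ := ⟨hα₀, le_refl _⟩
  have hmem2 : α₀/2 ∈ Ioc (0:ℝ) α₀ := ⟨by linarith, by linarith⟩
  obtain ⟨_, _, h1a, h2a⟩ := h α₀ hmem
  obtain ⟨_, _, h1b, h2b⟩ := h (α₀/2) hmem2
  have P0 : 0 ≤ (2-3*q)*(p-0) :=
    player1_cond α₀ p 0 q hα₀ hq1 (h1a 0 ⟨le_refl _, zero_le_one⟩ 1)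
  have P1 : 0 ≤ (2-3*q)*(p-1) :=
    player1_cond α₀ p 1 q hα₀ hq1 (h1a 1 ⟨zero_le_one, le_refl _⟩ 1)
  have Q0a : 0 ≤ (12*p - 4 - α₀*(1-7*p))*(q-0) :=
    player2_cond α₀ p q 0 hα₀ hq1 zero_le_one (h2a 0 ⟨le_refl _, zero_le_one⟩ 1)
  have Q1a : 0 ≤ (12*p - 4 - α₀*(1-7*p))*(q-1) :=
    player2_cond α₀ p q 1 hα₀ hq1 (le_refl _) (h2a 1 ⟨zero_le_one, le_refl _⟩ 1)
  have hα2 : (0:ℝ) < α₀/2 := by linarith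
  have Q0b : 0 ≤ (12*p - 4 - (α₀/2)*(1-7*p))*(q-0) :=
    player2_cond (α₀/2) p q 0 hα2 hq1 zero_le_one (h2b 0 ⟨le_refl _, zero_le_one⟩ 1)
  have Q1b : 0 ≤ (12*p - 4 - (α₀/2)*(1-7*p))*(q-1) :=
    player2_cond (α₀/2) p q 1 hα2 hq1 (le_refl _) (h2b 1 ⟨zero_le_one, le_refl _⟩ 1)
  rcases lt_trichotomy q (2/3) with hc | hc | hc
  · have hp : p = 1 := by nlinarith
    subst hp
    nlinarith
  · subst hc
    nlinarith [sq_nonneg α₀]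
  · have hp : p = 0 := by nlinarith
    subst hp
    nlinarith

end
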